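/- Let ρ be a positive integer and let α > 1. Then the equation x(1 − 2(1 − (1−x)²)^ρ) + 1 − 1/α = 0 has exactly one solution x in the open interval (0,1). -/

import Mathlib

/-!
Rearranged, the equation reads `x * u x = 1 - 1/α` with `u x = 2 (1 - (1 - x)²)^ρ - 1`, and
`1 - 1/α ∈ (0, 1)`. The function `x ↦ x * u x` is continuous with values `0` at `0` and `1` at `1`,
which gives a solution by the intermediate value theorem. Since `u` is monotone on `[0, 1]`,
`x ↦ x * u x` is strictly increasing wherever `u` is positive, and `u` is positive at every
solution because the right-hand side is positive; so there is only one.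
-/

open Set

theorem strictMonoOn_mul_self_of_monotoneOn {𝕜 : Type*} [Semiring 𝕜] [LinearOrder 𝕜]
    [IsStrictOrderedRing 𝕜] {u : 𝕜 → 𝕜} {s : Set 𝕜} (hu : MonotoneOn u s) :
    StrictMonoOn (fun x => x * u x) {x ∈ s | 0 ≤ x ∧ 0 < u x} := by
  rintro x ⟨hxs, hx0, hux⟩ y ⟨hys, -, -⟩ hxy
  calc x * u x < y * u x := mul_lt_mul_of_pos_right hxy hux
    _ ≤ y * u y := mul_le_mul_of_nonneg_left (hu hxs hys hxy.le) (hx0.trans hxy.le)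

theorem existsUnique_mem_Ioo_mul_self_eq {u : ℝ → ℝ} {b c : ℝ} (hb : 0 ≤ b)
    (hcont : ContinuousOn u (Icc 0 b)) (hmono : MonotoneOn u (Icc 0 b))
    (hc0 : 0 < c) (hcb : c < b * u b) :
    ∃! x, x ∈ Ioo 0 b ∧ x * u x = c := by
  have hcont' : ContinuousOn (fun x => x * u x) (Icc 0 b) := continuousOn_id.mul hcont
  obtain ⟨x, hx, hxc⟩ := intermediate_value_Ioo hb hcont' (by simpa using And.intro hc0 hcb)
  refine ⟨x, ⟨hx, hxc⟩, fun y ⟨hy, hyc⟩ => ?_⟩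
  have mem {z : ℝ} (hz : z ∈ Ioo 0 b) (hzc : z * u z = c) : z ∈ {z ∈ Icc 0 b | 0 ≤ z ∧ 0 < u z} :=
    ⟨Ioo_subset_Icc_self hz, hz.1.le, pos_of_mul_pos_right (hzc ▸ hc0) hz.1.le⟩
  exact (strictMonoOn_mul_self_of_monotoneOn hmono).injOn (mem hy hyc) (mem hx hxc)
    (hyc.trans hxc.symm)

theorem monotoneOn_one_sub_one_sub_sq_pow (ρ : ℕ) :
    MonotoneOn (fun x : ℝ => (1 - (1 - x) ^ 2) ^ ρ) (Icc 0 1) := by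
  rintro x ⟨hx0, hx1⟩ y ⟨-, hy1⟩ hxy
  dsimp only
  gcongr
  nlinarith

theorem unique_solution_supercritical (ρ : ℕ) (α : ℝ) (hα : 1 < α) :
    ∃! x : ℝ, x ∈ Set.Ioo (0:ℝ) 1 ∧
      x * (1 - 2 * (1 - (1 - x) ^ 2) ^ ρ) + 1 - 1 / α = 0 := by
  set u : ℝ → ℝ := fun x => 2 * (1 - (1 - x) ^ 2) ^ ρ - 1
  have hmono : MonotoneOn u (Icc 0 1) := fun x hx y hy hxy => by
    simpa [u] using monotoneOn_one_sub_one_sub_sq_pow ρ hx hy hxy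
  have hinv : 1 / α < 1 := (div_lt_one (by linarith)).2 hα
  have hsol := existsUnique_mem_Ioo_mul_self_eq (c := 1 - 1 / α) zero_le_one (by fun_prop) hmono
    (by linarith) (by norm_num [u]; linarith)
  refine (existsUnique_congr fun x => ?_).1 hsol
  refine and_congr_right fun _ => ?_
  dsimp only [u]
  constructor <;> intro h <;> linarith
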